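/- arXiv:2007.13611 — 2 statements merged into one kernel-verified Lean document; each statement's English description precedes it below -/
import Mathlib

section
/- Suppose every vertex of G has degree at least 2 and B·v = λ·v with λ ≠ 0 and v ≠ 0. Then there exist r ≥ 3 and distinct vertices i₀, i₁, …, i_{r−1} of G with i_s adjacent to i_{s+1 mod r} for every s, such that v_{i_s → i_{s+1 mod r}} ≠ 0 for every s = 0, …, r−1. -/
/-!
If `B v = μ v` with `μ ≠ 0`, then `v e = μ⁻¹ (B v) e` is a sum of values of `v` on the
non-backtracking predecessors of `e`, so every dart in the support of `v` has a non-backtracking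
predecessor in the support. Following predecessors from a dart in the support gives an infinite
backward non-backtracking walk, and the shortest loop in it is a cycle of length `≥ 3`: length `1`
is a loop edge and length `2` a backtrack.
-/

open Matrix Polynomial BigOperators

variable {V : Type*}

/-- The non-backtracking matrix of a graph `G`, indexed by darts (oriented edges):
`B[(k→l),(i→j)] = 1` if `j = k` and `i ≠ l`, else `0`. -/
def nbMatrix [DecidableEq V] (G : SimpleGraph V) : Matrix G.Dart G.Dart ℂ :=
  fun e f => if f.snd = e.fst ∧ f.fst ≠ e.snd then 1 else 0

def HasCycle (R : V → V → Prop) : Prop :=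
  ∃ r : ℕ, 3 ≤ r ∧ ∃ f : ZMod r → V, Function.Injective f ∧ ∀ s, R (f s) (f (s + 1))

theorem HasCycle.of_flip {R : V → V → Prop} (h : HasCycle (flip R)) : HasCycle R := by
  obtain ⟨r, hr, f, hf, hR⟩ := h
  refine ⟨r, hr, f ∘ Neg.neg, hf.comp neg_injective, fun s => ?_⟩
  simpa [flip, add_comm] using hR (-(s + 1))

theorem exists_shortest_loop [Finite V] (x : ℕ → V) :
    ∃ a t, 0 < t ∧ x (a + t) = x a ∧ Set.InjOn (fun k => x (a + k)) (Set.Iio t) := by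
  classical
  have hP : ∃ t, 0 < t ∧ ∃ a, x (a + t) = x a := by
    obtain ⟨i, j, hij, hx⟩ := Finite.exists_ne_map_eq_of_infinite x
    rcases hij.lt_or_gt with h | h
    · exact ⟨j - i, by omega, i, by rw [Nat.add_sub_cancel' h.le, hx]⟩
    · exact ⟨i - j, by omega, j, by rw [Nat.add_sub_cancel' h.le, hx]⟩
  obtain ⟨ht, a, ha⟩ := Nat.find_spec hP
  refine ⟨a, Nat.find hP, ht, ha, fun k hk l hl hkl => ?_⟩
  by_contra hne
  wlog hlt : k < l generalizing k l
  · exact this l hl k hk hkl.symm (Ne.symm hne) (by omega)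
  have hlen : l - k < Nat.find hP := by simp only [Set.mem_Iio] at hk hl; omega
  refine Nat.find_min hP hlen ⟨by omega, a + k, ?_⟩
  rw [show a + k + (l - k) = a + l by omega]
  exact hkl.symm

theorem hasCycle_of_loop {R : V → V → Prop} (y : ℕ → V) {t : ℕ} (ht : 3 ≤ t)
    (hloop : y t = y 0) (hinj : Set.InjOn y (Set.Iio t))
    (hR : ∀ k < t, R (y k) (y (k + 1))) : HasCycle R := by
  have : NeZero t := ⟨by omega⟩
  have hcast : ∀ k ≤ t, y (k : ZMod t).val = y k := by
    intro k hk
    rcases hk.lt_or_eq with hk | rfl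
    · rw [ZMod.val_cast_of_lt hk]
    · rw [ZMod.natCast_self, ZMod.val_zero, hloop]
  refine ⟨t, ht, fun s => y s.val, fun s s' h => ZMod.val_injective t
    (hinj (ZMod.val_lt s) (ZMod.val_lt s') h), fun s => ?_⟩
  have hs := ZMod.val_lt s
  have := hR s.val hs
  rwa [← hcast (s.val + 1) hs, Nat.cast_succ, ZMod.natCast_zmod_val] at this

theorem hasCycle_of_nonbacktracking [Finite V] {R : V → V → Prop} (hR : ∀ u, ¬ R u u)
    (x : ℕ → V) (hx : ∀ n, R (x n) (x (n + 1))) (hnb : ∀ n, x (n + 2) ≠ x n) :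
    HasCycle R := by
  obtain ⟨a, t, ht, hloop, hinj⟩ := exists_shortest_loop x
  have ht1 : t ≠ 1 := by
    rintro rfl
    exact hR _ (hloop ▸ hx a)
  have ht2 : t ≠ 2 := by
    rintro rfl
    exact hnb a hloop
  exact hasCycle_of_loop _ (by omega) (by simpa using hloop) hinj fun k _ => hx (a + k)

namespace SimpleGraph

variable {G : SimpleGraph V}

theorem exists_nonbacktracking_seq_of_forall_exists_pred {p : G.Dart → Prop}
    (hp : ∀ e, p e → ∃ f : G.Dart, f.snd = e.fst ∧ f.fst ≠ e.snd ∧ p f)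
    {e₀ : G.Dart} (he₀ : p e₀) :
    ∃ x : ℕ → V, ∀ n, (∃ h : G.Adj (x (n + 1)) (x n), p ⟨(x (n + 1), x n), h⟩) ∧
      x (n + 2) ≠ x n := by
  choose pred hpred using hp
  let step : {e // p e} → {e // p e} := fun e => ⟨pred e.1 e.2, (hpred e.1 e.2).2.2⟩
  let d : ℕ → {e // p e} := fun n => step^[n] ⟨e₀, he₀⟩
  have hd : ∀ n, (d (n + 1)).1 = pred (d n).1 (d n).2 := fun n =>
    congrArg Subtype.val (Function.iterate_succ_apply' _ n _)
  have hsnd : ∀ n, (d (n + 1)).1.snd = (d n).1.fst := fun n => by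
    rw [hd]; exact (hpred _ _).1
  refine ⟨fun n => (d n).1.snd, fun n => ⟨?_, ?_⟩⟩
  · have he : (d n).1 = ⟨((d (n + 1)).1.snd, (d n).1.snd), hsnd n ▸ (d n).1.adj⟩ :=
      Dart.ext _ _ (Prod.ext (hsnd n).symm rfl)
    exact ⟨_, he ▸ (d n).2⟩
  · show (d (n + 2)).1.snd ≠ (d n).1.snd
    rw [hsnd, hd]
    exact (hpred _ _).2.1

end SimpleGraph

theorem nbMatrix_mulVec_apply [DecidableEq V] {G : SimpleGraph V} [Fintype G.Dart]
    (v : G.Dart → ℂ) (e : G.Dart) :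
    (nbMatrix G *ᵥ v) e = ∑ f with f.snd = e.fst ∧ f.fst ≠ e.snd, v f := by
  simp [mulVec, dotProduct, nbMatrix, Finset.sum_filter]

theorem nbMatrix_eigenvector_exists_pred_ne_zero [DecidableEq V] {G : SimpleGraph V}
    [Fintype G.Dart] {v : G.Dart → ℂ} {μ : ℂ} (hμ : μ ≠ 0)
    (heig : nbMatrix G *ᵥ v = μ • v) {e : G.Dart} (he : v e ≠ 0) :
    ∃ f : G.Dart, f.snd = e.fst ∧ f.fst ≠ e.snd ∧ v f ≠ 0 := by
  by_contra! h
  refine mul_ne_zero hμ he ?_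
  rw [← smul_eq_mul, ← Pi.smul_apply, ← heig, nbMatrix_mulVec_apply]
  refine Finset.sum_eq_zero fun f hf => ?_
  obtain ⟨-, hfe, hfe'⟩ := Finset.mem_filter.mp hf
  exact h f hfe hfe'

theorem nbMatrix_eigenvector_nonzero_on_cycle_general
    [DecidableEq V] [Fintype V] (G : SimpleGraph V) [DecidableRel G.Adj]
    (v : G.Dart → ℂ) (μ : ℂ) (hμ : μ ≠ 0) (hv : v ≠ 0)
    (heig : (nbMatrix G).mulVec v = μ • v) :
    ∃ r : ℕ, 3 ≤ r ∧ ∃ f : ZMod r → V, Function.Injective f ∧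
      ∃ hadj : ∀ s : ZMod r, G.Adj (f s) (f (s + 1)),
        ∀ s : ZMod r, v ⟨(f s, f (s + 1)), hadj s⟩ ≠ 0 := by
  obtain ⟨e₀, he₀⟩ := Function.ne_iff.mp hv
  obtain ⟨x, hx⟩ := SimpleGraph.exists_nonbacktracking_seq_of_forall_exists_pred
    (fun _ he => nbMatrix_eigenvector_exists_pred_ne_zero hμ heig he) he₀
  obtain ⟨r, hr, f, hf, hcyc⟩ := HasCycle.of_flip
    (hasCycle_of_nonbacktracking (R := flip fun u w => ∃ h : G.Adj u w, v ⟨(u, w), h⟩ ≠ 0)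
      (fun u ⟨h, _⟩ => G.irrefl h) x (fun n => (hx n).1) (fun n => (hx n).2))
  choose hadj hnz using hcyc
  exact ⟨r, hr, f, hf, hadj, hnz⟩

/-- If every vertex has degree at least `2` and `B·v = λ·v` with `λ ≠ 0`,
`v ≠ 0`, then there is a cycle `i₀, i₁, …, i_{r−1}` (`r ≥ 3`, distinct vertices, consecutive
ones adjacent) on each of whose darts `i_s → i_{s+1}` the vector `v` is nonzero. -/
theorem nbMatrix_eigenvector_nonzero_on_cycle
    [DecidableEq V] [Fintype V] (G : SimpleGraph V) [DecidableRel G.Adj]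
    (hconn : G.Connected) (hdeg : ∀ u : V, 2 ≤ G.degree u)
    (v : G.Dart → ℂ) (μ : ℂ) (hμ : μ ≠ 0) (hv : v ≠ 0)
    (heig : (nbMatrix G).mulVec v = μ • v) :
    ∃ r : ℕ, 3 ≤ r ∧ ∃ f : ZMod r → V, Function.Injective f ∧
      ∃ hadj : ∀ s : ZMod r, G.Adj (f s) (f (s + 1)),
        ∀ s : ZMod r, v ⟨(f s, f (s + 1)), hadj s⟩ ≠ 0 :=
  nbMatrix_eigenvector_nonzero_on_cycle_general G v μ hμ hv heig
end

section
/- Suppose every vertex of G has degree at least 2, and suppose B·v = λ·v with λ ≠ 0 and v ≠ 0. Then v is non-leaky if and only if λ is a root of unity, i.e. there exists an integer r ≥ 1 with λ^r = 1. -/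
/-!
Write `a k = (v into k)`. Row `k→l` of `B v = μ v` reads `μ v(k→l) + v(l→k) = a k`, and summing
it over the darts leaving `k` gives `μ (v from k) = (d_k - 1) a k`. Pairing the eigenvalue
equation with `v` and with the reversed vector `e ↦ v(ē)` and combining the two results gives
`(|μ|² - 1) ‖v‖² = ∑ₖ (d_k - 2) |a k|² + (μ - μ̄) P`, where `P = ∑ₑ conj v(e) v(ē)` is real;
taking real parts,
  `(|μ|² - 1) ‖v‖² = ∑ₖ (d_k - 2) |a k|²`.
So, when all degrees are at least `2`, a nonzero eigenvector is non-leaky iff `|μ| = 1`.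
A root of unity has `|μ| = 1`. Conversely, `μ` is an algebraic integer (an eigenvalue of a
`0/1` matrix), and "`B w = x w` with `w` non-leaky" is a linear system with coefficients in
`ℚ(μ)`, so every conjugate of `μ` also has a non-leaky eigenvector, hence lies on the unit circle,
and Kronecker's theorem makes `μ` a root of unity.
-/

open Matrix Polynomial BigOperators

variable {V : Type*}

/-- `(v into k) = ∑_{i adjacent to k} v_{i→k}`: the sum of `v` over all darts with target `k`. -/
noncomputable def vInto [DecidableEq V] [Fintype V] (G : SimpleGraph V) [DecidableRel G.Adj]
    (v : G.Dart → ℂ) (k : V) : ℂ :=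
  ∑ f : G.Dart, if f.snd = k then v f else 0

/-- `(v from k) = ∑_{i adjacent to k} v_{k→i}`: the sum of `v` over all darts with source `k`. -/
noncomputable def vFrom [DecidableEq V] [Fintype V] (G : SimpleGraph V) [DecidableRel G.Adj]
    (v : G.Dart → ℂ) (k : V) : ℂ :=
  ∑ f : G.Dart, if f.fst = k then v f else 0

/-- A vector `v` indexed by darts is non-leaky if `(d_k − 2)·(v into k) = 0` for every
vertex `k`. -/
def NonLeaky [DecidableEq V] [Fintype V] (G : SimpleGraph V) [DecidableRel G.Adj]
    (v : G.Dart → ℂ) : Prop :=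
  ∀ k : V, ((G.degree k : ℂ) - 2) * vInto G v k = 0

section DartSums

variable [Fintype V] (G : SimpleGraph V) [DecidableRel G.Adj]

theorem sum_dart_symm {M : Type*} [AddCommMonoid M] (g : G.Dart → M) :
    ∑ e : G.Dart, g e.symm = ∑ e : G.Dart, g e :=
  Equiv.sum_comp (SimpleGraph.Dart.symm_involutive.toPerm _) g

theorem star_sum_star_mul_symm (w : G.Dart → ℂ) :
    star (∑ e, star (w e) * w e.symm) = ∑ e, star (w e) * w e.symm := by
  simp only [star_sum, star_mul, star_star]
  exact sum_dart_symm G fun e => star (w e) * w e.symm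

variable [DecidableEq V]

theorem sum_dart_mul_fst (g : V → ℂ) (w : G.Dart → ℂ) :
    ∑ e : G.Dart, g e.fst * w e = ∑ k, g k * vFrom G w k := by
  simp only [vFrom, Finset.mul_sum, mul_ite, mul_zero]
  rw [Finset.sum_comm]
  simp

theorem vFrom_comp_symm (w : G.Dart → ℂ) (k : V) :
    vFrom G (fun e => w e.symm) k = vInto G w k :=
  sum_dart_symm G fun e => if e.snd = k then w e else 0

theorem vFrom_comp_fst (g : V → ℂ) (k : V) :
    vFrom G (fun e => g e.fst) k = G.degree k * g k := by
  rw [vFrom, ← Finset.sum_filter, Finset.sum_congr rfl fun e he => by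
    rw [(Finset.mem_filter.mp he).2], Finset.sum_const, G.dart_fst_fiber_card_eq_degree,
    nsmul_eq_mul]

theorem star_vFrom (w : G.Dart → ℂ) (k : V) : star (vFrom G w k) = vFrom G (star w) k := by
  simp [vFrom, apply_ite]

theorem vFrom_sub (x y : G.Dart → ℂ) (k : V) :
    vFrom G (fun e => x e - y e) k = vFrom G x k - vFrom G y k := by
  simp only [vFrom, ← Finset.sum_sub_distrib]
  exact Finset.sum_congr rfl fun e _ => by split_ifs <;> simp

theorem vFrom_smul (c : ℂ) (w : G.Dart → ℂ) (k : V) : vFrom G (c • w) k = c * vFrom G w k := by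
  simp [vFrom, Finset.mul_sum]

end DartSums

theorem natCast_sub_two_mul_eq_zero_iff (n : ℕ) (z : ℂ) :
    ((n : ℂ) - 2) * z = 0 ↔ ((n : ℝ) - 2) * Complex.normSq z = 0 := by
  simp only [mul_eq_zero, sub_eq_zero, map_eq_zero]
  norm_cast

section Eigenvectors

variable [DecidableEq V] [Fintype V] (G : SimpleGraph V) [DecidableRel G.Adj]

theorem nbMatrix_mulVec_apply_s9 (w : G.Dart → ℂ) (e : G.Dart) :
    (nbMatrix G *ᵥ w) e = vInto G w e.fst - w e.symm := by
  rw [vInto, ← Fintype.sum_ite_eq' e.symm w, ← Finset.sum_sub_distrib]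
  refine Fintype.sum_congr _ _ fun f => ?_
  have hsymm : f = e.symm ↔ f.fst = e.snd ∧ f.snd = e.fst :=
    (SimpleGraph.Dart.ext_iff _ _).trans Prod.ext_iff
  by_cases h1 : f.snd = e.fst <;> by_cases h2 : f.fst = e.snd <;> simp [nbMatrix, h1, h2, hsymm]

theorem vFrom_nbMatrix_mulVec (w : G.Dart → ℂ) (k : V) :
    vFrom G (nbMatrix G *ᵥ w) k = (G.degree k - 1) * vInto G w k := by
  rw [funext (nbMatrix_mulVec_apply_s9 G w), vFrom_sub, vFrom_comp_fst, vFrom_comp_symm]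
  ring

theorem sum_star_mul_nbMatrix_mulVec (x w : G.Dart → ℂ) :
    ∑ e, star (x e) * (nbMatrix G *ᵥ w) e
      = ∑ k, star (vFrom G x k) * vInto G w k - ∑ e, star (x e) * w e.symm := by
  simp only [nbMatrix_mulVec_apply_s9, mul_sub, Finset.sum_sub_distrib]
  congr 1
  simp only [star_vFrom, mul_comm (vFrom _ _ _), ← sum_dart_mul_fst]
  exact Finset.sum_congr rfl fun e _ => mul_comm _ _

variable {v : G.Dart → ℂ} {μ : ℂ}

theorem normSq_sub_one_mul_sum_normSq (heig : nbMatrix G *ᵥ v = μ • v) :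
    (Complex.normSq μ - 1) * ∑ e, Complex.normSq (v e)
      = ∑ k, ((G.degree k : ℝ) - 2) * Complex.normSq (vInto G v k) := by
  have hself : μ * ∑ e, star (v e) * v e
      = ∑ k, star (vFrom G v k) * vInto G v k - ∑ e, star (v e) * v e.symm := by
    simpa [heig, mul_left_comm _ μ, ← Finset.mul_sum] using sum_star_mul_nbMatrix_mulVec G v v
  have hrev : μ * ∑ e, star (v e) * v e.symm
      = ∑ k, star (vInto G v k) * vInto G v k - ∑ e, star (v e) * v e := by
    have h := sum_star_mul_nbMatrix_mulVec G (fun e => v e.symm) v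
    simp only [heig, Pi.smul_apply, smul_eq_mul, mul_left_comm _ μ, ← Finset.mul_sum,
      vFrom_comp_symm] at h
    rw [sum_dart_symm G fun e => star (v e) * v e,
      ← sum_dart_symm G fun e => star (v e.symm) * v e] at h
    simpa only [SimpleGraph.Dart.symm_symm] using h
  obtain ⟨p, hp⟩ := Complex.conj_eq_iff_real.mp (star_sum_star_mul_symm G v)
  have hfrom : ∀ k, star μ * star (vFrom G v k) = ((G.degree k : ℂ) - 1) * star (vInto G v k) :=
    fun k => by
      rw [← star_mul', ← vFrom_smul, ← heig, vFrom_nbMatrix_mulVec, star_mul', star_sub,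
        star_natCast, star_one]
  have key : ((Complex.normSq μ - 1 : ℝ) : ℂ) * ((∑ e, Complex.normSq (v e) : ℝ) : ℂ)
      = ((∑ k, ((G.degree k : ℝ) - 2) * Complex.normSq (vInto G v k) : ℝ) : ℂ)
        + (μ - star μ) * p := by
    push_cast
    simp only [Complex.normSq_eq_conj_mul_self, ← Complex.star_def]
    have hsum : star μ * ∑ k, star (vFrom G v k) * vInto G v k
        = ∑ k, ((G.degree k : ℂ) - 1) * (star (vInto G v k) * vInto G v k) := by
      simp only [Finset.mul_sum, ← mul_assoc, hfrom]
    have hsplit : ∑ k, ((G.degree k : ℂ) - 2) * (star (vInto G v k) * vInto G v k)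
        = ∑ k, ((G.degree k : ℂ) - 1) * (star (vInto G v k) * vInto G v k)
          - ∑ k, star (vInto G v k) * vInto G v k := by
      rw [← Finset.sum_sub_distrib]
      exact Finset.sum_congr rfl fun k _ => by ring
    linear_combination star μ * hself - hrev + hsum - hsplit - (star μ - μ) * hp
  simpa using congrArg Complex.re key

theorem norm_eq_one_of_nonLeaky (hv : v ≠ 0) (heig : nbMatrix G *ᵥ v = μ • v)
    (hnl : NonLeaky G v) : ‖μ‖ = 1 := by
  have h := normSq_sub_one_mul_sum_normSq G heig
  have hleak : ∑ k, ((G.degree k : ℝ) - 2) * Complex.normSq (vInto G v k) = 0 :=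
    Finset.sum_eq_zero fun k _ => (natCast_sub_two_mul_eq_zero_iff _ _).mp (hnl k)
  rw [hleak] at h
  obtain ⟨e, he⟩ := Function.ne_iff.mp hv
  have hpos : 0 < ∑ e, Complex.normSq (v e) :=
    Finset.sum_pos' (fun _ _ => Complex.normSq_nonneg _)
      ⟨e, Finset.mem_univ e, Complex.normSq_pos.mpr he⟩
  have hμ : ‖μ‖ ^ 2 = 1 := by
    linarith [Complex.sq_norm μ, (mul_eq_zero.mp h).resolve_right hpos.ne']
  exact (pow_eq_one_iff_of_nonneg (norm_nonneg μ) two_ne_zero).mp hμ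

theorem nonLeaky_of_norm_eq_one (hdeg : ∀ u : V, 2 ≤ G.degree u)
    (heig : nbMatrix G *ᵥ v = μ • v) (hμ : ‖μ‖ = 1) : NonLeaky G v := by
  have h := normSq_sub_one_mul_sum_normSq G heig
  rw [← Complex.sq_norm, hμ, one_pow, sub_self, zero_mul, eq_comm,
    Finset.sum_eq_zero_iff_of_nonneg fun k _ =>
      mul_nonneg (sub_nonneg.mpr (by exact_mod_cast hdeg k)) (Complex.normSq_nonneg _)] at h
  intro k
  exact (natCast_sub_two_mul_eq_zero_iff _ _).mpr (h k (Finset.mem_univ k))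

end Eigenvectors

theorem Matrix.isIntegral_of_map_mulVec_eq_smul {R S n : Type*} [CommRing R] [CommRing S]
    [IsDomain S] [Algebra R S] [Fintype n] [DecidableEq n] (A : Matrix n n R) {v : n → S}
    (hv : v ≠ 0) {μ : S} (h : A.map (algebraMap R S) *ᵥ v = μ • v) : IsIntegral R μ := by
  refine ⟨A.charpoly, A.charpoly_monic, ?_⟩
  rw [Polynomial.eval₂_eq_eval_map, ← Matrix.charpoly_map, Matrix.eval_charpoly,
    ← Matrix.exists_mulVec_eq_zero_iff]
  refine ⟨v, hv, ?_⟩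
  rw [Matrix.sub_mulVec, h, sub_eq_zero]
  ext i
  simp [Matrix.mulVec_diagonal]

theorem Matrix.exists_mulVec_eq_zero_of_map {K L m n : Type*} [Field K] [Field L] [Fintype m]
    [Fintype n] (M : Matrix m n K) (f : K →+* L) {w : n → L} (hw : w ≠ 0)
    (h : M.map f *ᵥ w = 0) : ∃ u ≠ 0, M *ᵥ u = 0 := by
  classical
  by_contra! hM
  obtain ⟨g, hg⟩ := (Matrix.toLin' M).exists_leftInverse_of_injective
    (LinearMap.ker_eq_bot'.mpr fun u hu => by_contra fun h0 => hM u h0 hu)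
  have hgM : LinearMap.toMatrix' g * M = 1 := Matrix.toLin'.injective <| by
    rw [Matrix.toLin'_mul, Matrix.toLin'_toMatrix', hg, Matrix.toLin'_one]
  have hw' : ((LinearMap.toMatrix' g).map f * M.map f) *ᵥ w = w := by
    rw [← Matrix.map_mul, hgM, Matrix.map_one f f.map_zero f.map_one, Matrix.one_mulVec]
  rw [← Matrix.mulVec_mulVec, h, Matrix.mulVec_zero] at hw'
  exact hw hw'.symm

open IntermediateField in
theorem exists_pow_eq_one_of_norm_embedding_eq_one {μ : ℂ} (hμ : IsIntegral ℤ μ)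
    (h : ∀ φ : ℚ⟮μ⟯ →+* ℂ, ‖φ (AdjoinSimple.gen ℚ μ)‖ = 1) : ∃ r : ℕ, 1 ≤ r ∧ μ ^ r = 1 := by
  have : FiniteDimensional ℚ ℚ⟮μ⟯ := adjoin.finiteDimensional hμ.tower_top
  have : NumberField ℚ⟮μ⟯ := ⟨⟩
  have hgen : IsIntegral ℤ (AdjoinSimple.gen ℚ μ) :=
    (isIntegral_algebraMap_iff (algebraMap ℚ⟮μ⟯ ℂ).injective).mp
      (by rwa [AdjoinSimple.algebraMap_gen])
  obtain ⟨r, hr, hpow⟩ := NumberField.Embeddings.pow_eq_one_of_norm_eq_one ℚ⟮μ⟯ ℂ hgen h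
  refine ⟨r, hr, ?_⟩
  simpa using congrArg (algebraMap ℚ⟮μ⟯ ℂ) hpow

section Conjugates

variable [DecidableEq V] (G : SimpleGraph V)

def nbMatrixOver (R : Type*) [Zero R] [One R] : Matrix G.Dart G.Dart R :=
  Matrix.of fun e f => if f.snd = e.fst ∧ f.fst ≠ e.snd then 1 else 0

theorem nbMatrixOver_complex : nbMatrixOver G ℂ = nbMatrix G := rfl

theorem nbMatrixOver_map {R S : Type*} [NonAssocSemiring R] [NonAssocSemiring S] (f : R →+* S) :
    (nbMatrixOver G R).map f = nbMatrixOver G S := by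
  ext e e'
  simp [nbMatrixOver, apply_ite f]

variable [Fintype V] [DecidableRel G.Adj]

def nonLeakyEigenMatrix {R : Type*} [Ring R] (x : R) : Matrix (G.Dart ⊕ V) G.Dart R :=
  Matrix.fromRows (nbMatrixOver G R - x • 1)
    (Matrix.of fun k e => if e.snd = k then (G.degree k : R) - 2 else 0)

theorem nonLeakyEigenMatrix_map {R S : Type*} [Ring R] [Ring S] (f : R →+* S) (x : R) :
    (nonLeakyEigenMatrix G x).map f = nonLeakyEigenMatrix G (f x) := by
  ext (d | k) e <;>
    simp [nonLeakyEigenMatrix, nbMatrixOver, Matrix.one_apply, apply_ite f, map_ofNat]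

theorem nonLeakyEigenMatrix_mulVec_eq_zero_iff (μ : ℂ) (w : G.Dart → ℂ) :
    nonLeakyEigenMatrix G μ *ᵥ w = 0 ↔ nbMatrix G *ᵥ w = μ • w ∧ NonLeaky G w := by
  rw [nonLeakyEigenMatrix, Matrix.fromRows_mulVec, ← Sum.elim_zero_zero, Sum.elim_eq_iff,
    Matrix.sub_mulVec, Matrix.smul_mulVec, Matrix.one_mulVec, sub_eq_zero, nbMatrixOver_complex]
  refine and_congr_right' ⟨fun h k => ?_, fun h => funext fun k => ?_⟩
  · simpa [Matrix.mulVec, dotProduct, vInto, Finset.mul_sum] using congrFun h k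
  · simpa [Matrix.mulVec, dotProduct, vInto, Finset.mul_sum] using h k

theorem exists_nonLeaky_eigenvector_of_ringHom {K : Type*} [Field K] (f φ : K →+* ℂ) (x : K)
    {v : G.Dart → ℂ} (hv : v ≠ 0) (heig : nbMatrix G *ᵥ v = f x • v) (hnl : NonLeaky G v) :
    ∃ w ≠ 0, nbMatrix G *ᵥ w = φ x • w ∧ NonLeaky G w := by
  obtain ⟨u, hu, hMu⟩ := (nonLeakyEigenMatrix G x).exists_mulVec_eq_zero_of_map f hv <| by
    rw [nonLeakyEigenMatrix_map, nonLeakyEigenMatrix_mulVec_eq_zero_iff]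
    exact ⟨heig, hnl⟩
  refine ⟨φ ∘ u, fun h => hu (funext fun e => φ.injective ?_),
    (nonLeakyEigenMatrix_mulVec_eq_zero_iff G _ _).mp ?_⟩
  · simpa using congrFun h e
  · ext i
    rw [← nonLeakyEigenMatrix_map, ← RingHom.map_mulVec, hMu, Pi.zero_apply, map_zero,
      Pi.zero_apply]

end Conjugates

theorem nbMatrix_nonLeaky_iff_rootOfUnity_general
    [DecidableEq V] [Fintype V] (G : SimpleGraph V) [DecidableRel G.Adj]
    (hdeg : ∀ u : V, 2 ≤ G.degree u)
    (v : G.Dart → ℂ) (μ : ℂ) (hv : v ≠ 0)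
    (heig : (nbMatrix G).mulVec v = μ • v) :
    NonLeaky G v ↔ ∃ r : ℕ, 1 ≤ r ∧ μ ^ r = 1 := by
  constructor
  · intro hnl
    have hint : IsIntegral ℤ μ := (nbMatrixOver G ℤ).isIntegral_of_map_mulVec_eq_smul hv
      (by rwa [nbMatrixOver_map, nbMatrixOver_complex])
    refine exists_pow_eq_one_of_norm_embedding_eq_one hint fun φ => ?_
    obtain ⟨w, hw, hweig, hwnl⟩ := exists_nonLeaky_eigenvector_of_ringHom G (algebraMap _ ℂ) φ _
      hv (by rwa [IntermediateField.AdjoinSimple.algebraMap_gen]) hnl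
    exact norm_eq_one_of_nonLeaky G hw hweig hwnl
  · rintro ⟨r, hr, hμr⟩
    exact nonLeaky_of_norm_eq_one G hdeg heig (Complex.norm_eq_one_of_pow_eq_one hμr (by omega))

/-- If every vertex has degree at least `2` and `B·v = λ·v` with `λ ≠ 0`,
`v ≠ 0`, then `v` is non-leaky if and only if `λ` is a root of unity. -/
theorem nbMatrix_nonLeaky_iff_rootOfUnity
    [DecidableEq V] [Fintype V] (G : SimpleGraph V) [DecidableRel G.Adj]
    (hconn : G.Connected) (hdeg : ∀ u : V, 2 ≤ G.degree u)
    (v : G.Dart → ℂ) (μ : ℂ) (hμ : μ ≠ 0) (hv : v ≠ 0)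
    (heig : (nbMatrix G).mulVec v = μ • v) :
    NonLeaky G v ↔ ∃ r : ℕ, 1 ≤ r ∧ μ ^ r = 1 :=
  nbMatrix_nonLeaky_iff_rootOfUnity_general G hdeg v μ hv heig
end
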